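/- arXiv:2012.02815 — 3 statements merged into one kernel-verified Lean document; each statement's English description precedes it below -/
import Mathlib

section
/- Let $i, j$ be nonnegative integers with $i \leq j$. Then $\sum_{e=0}^{2i} (-1)^e \frac{\binom{2i}{e}}{\binom{i+j}{e}\binom{i+j}{2i-e}} \binom{j}{e}\binom{j}{2i-e} = (-1)^i \frac{\binom{2i}{i}}{\binom{i+j}{i}^2}$. -/
/-!
Since `C(j, e) / C(i + j, e) = j! / (i + j)! · (i + j - e)(i + j - e - 1) ⋯ (j - e + 1)`, and
similarly for `2i - e`, each summand is `(j! / (i + j)!)² (-1)^e C(2i, e) P(e)` for a polynomial `P`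
of degree `2i` with leading coefficient `(-1)^i`. The sum is then the `2i`-th forward difference of
`P` at `0`, which equals `(2i)! (-1)^i`.
-/

open Finset Polynomial Nat

theorem Nat.choose_mul_descFactorial_mul_factorial {i j e : ℕ} (he : e ≤ i + j) :
    (i + j).choose e * (i + j - e).descFactorial i * j ! = j.choose e * (i + j)! := by
  rcases lt_or_ge j e with hje | hej
  · rw [Nat.descFactorial_of_lt (by omega), Nat.choose_eq_zero_of_lt hje]; simp
  obtain ⟨a, rfl⟩ := Nat.exists_eq_add_of_le hej
  refine Nat.eq_of_mul_eq_mul_right (Nat.mul_pos (factorial_pos e) (factorial_pos a)) ?_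
  have h₁ := Nat.choose_mul_factorial_mul_factorial he
  have h₂ := Nat.factorial_mul_descFactorial (show i ≤ i + a by omega)
  have h₃ := Nat.add_choose_mul_factorial_mul_factorial a e
  rw [show i + (e + a) - e = i + a by omega] at h₁ ⊢
  rw [Nat.add_sub_cancel_left] at h₂
  rw [add_comm a e] at h₃
  calc (i + (e + a)).choose e * (i + a).descFactorial i * (e + a)! * (e ! * a !)
      = ((i + (e + a)).choose e * e ! * (a ! * (i + a).descFactorial i)) * (e + a)! := by ring
    _ = (e + a).choose e * (i + (e + a))! * (e ! * a !) := by
      rw [h₂, h₁, ← h₃]; ring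

theorem choose_div_choose_add_eq {K : Type*} [Field K] [CharZero K] {i j e : ℕ}
    (he : e ≤ i + j) :
    (j.choose e : K) / (i + j).choose e
      = j ! / (i + j)! * ((i + j - e).descFactorial i : ℕ) := by
  have hc : ((i + j).choose e : K) ≠ 0 := Nat.cast_ne_zero.mpr (Nat.choose_pos he).ne'
  have hf : ((i + j)! : K) ≠ 0 := Nat.cast_ne_zero.mpr (factorial_ne_zero _)
  rw [div_mul_eq_mul_div, div_eq_div_iff hc hf]
  norm_cast
  rw [← Nat.choose_mul_descFactorial_mul_factorial he]
  ring

theorem Polynomial.sum_range_neg_one_pow_mul_choose_mul_eval {R : Type*} [CommRing R]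
    (P : R[X]) :
    ∑ k ∈ range (P.natDegree + 1),
      (-1) ^ (P.natDegree - k) * (P.natDegree.choose k : R) * P.eval (k : R)
      = P.natDegree ! * P.leadingCoeff := by
  have h := fwdDiff_iter_eq_sum_shift (1 : R) P.eval P.natDegree 0
  rw [P.fwdDiff_iter_degree_eq_factorial] at h
  simpa [zsmul_eq_mul, mul_comm] using h.symm

theorem Polynomial.natDegree_C_sub_X {R : Type*} [Ring R] [Nontrivial R] (a : R) :
    (C a - X).natDegree = 1 := by
  rw [← neg_sub, natDegree_neg, natDegree_X_sub_C]

section BinomialRatioPoly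

variable {R : Type*} [CommRing R]

variable (R) in
noncomputable def binomialRatioPoly (i j : ℕ) : R[X] :=
  (descPochhammer R i).comp (C ((i + j : ℕ) : R) - X) *
    (descPochhammer R i).comp (X + C ((j - i : ℕ) : R))

theorem binomialRatioPoly_eval {i j e : ℕ} (hij : i ≤ j) (he : e ≤ 2 * i) :
    (binomialRatioPoly R i j).eval (e : R)
      = ((i + j - e).descFactorial i : R) * ((i + j - (2 * i - e)).descFactorial i : R) := by
  have h₁ : ((i + j : ℕ) : R) - e = ((i + j - e : ℕ) : R) := by
    rw [Nat.cast_sub (by omega)]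
  have h₂ : (e : R) + ((j - i : ℕ) : R) = ((i + j - (2 * i - e) : ℕ) : R) := by
    rw [show i + j - (2 * i - e) = e + (j - i) by omega, Nat.cast_add]
  simp only [binomialRatioPoly, eval_mul, eval_comp, eval_sub, eval_add, eval_C, eval_X, h₁, h₂,
    descPochhammer_eval_eq_descFactorial]

theorem binomialRatioPoly_leadingCoeff [IsDomain R] (i j : ℕ) :
    (binomialRatioPoly R i j).leadingCoeff = (-1) ^ i := by
  rw [binomialRatioPoly, leadingCoeff_mul,
    leadingCoeff_comp (by rw [natDegree_C_sub_X]; exact one_ne_zero),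
    leadingCoeff_comp (by rw [natDegree_X_add_C]; exact one_ne_zero),
    (monic_descPochhammer R i).leadingCoeff, descPochhammer_natDegree,
    ← neg_sub, leadingCoeff_neg, leadingCoeff_X_sub_C, leadingCoeff_X_add_C]
  simp

theorem binomialRatioPoly_natDegree [IsDomain R] (i j : ℕ) :
    (binomialRatioPoly R i j).natDegree = 2 * i := by
  have hlc : (binomialRatioPoly R i j).leadingCoeff ≠ 0 := by
    simp [binomialRatioPoly_leadingCoeff]
  rw [binomialRatioPoly, leadingCoeff_mul] at hlc
  rw [binomialRatioPoly, natDegree_mul' hlc, natDegree_comp, natDegree_comp,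
    descPochhammer_natDegree, natDegree_C_sub_X, natDegree_X_add_C, two_mul, mul_one]

end BinomialRatioPoly

theorem summand_eq_mul_binomialRatioPoly_eval {K : Type*} [Field K] [CharZero K] {i j e : ℕ}
    (hij : i ≤ j) (he : e ≤ 2 * i) :
    (-1 : K) ^ e * (((2 * i).choose e : K) /
        (((i + j).choose e : K) * ((i + j).choose (2 * i - e) : K))) *
        (j.choose e : K) * (j.choose (2 * i - e) : K)
      = (j ! / (i + j)! : K) ^ 2 *
        ((-1) ^ (2 * i - e) * ((2 * i).choose e : K) * (binomialRatioPoly K i j).eval (e : K)) := by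
  have hsign : (-1 : K) ^ (2 * i - e) = (-1) ^ e := by
    rw [neg_one_pow_eq_pow_mod_two, neg_one_pow_eq_pow_mod_two (n := e)]
    congr 1
    omega
  calc _ = (-1 : K) ^ e * ((2 * i).choose e : K) * ((j.choose e : K) / (i + j).choose e) *
        ((j.choose (2 * i - e) : K) / (i + j).choose (2 * i - e)) := by ring
    _ = _ := by
      rw [choose_div_choose_add_eq (by omega), choose_div_choose_add_eq (by omega),
        binomialRatioPoly_eval hij he, hsign]
      ring

theorem stmt_0 (i j : ℕ) (hij : i ≤ j) :
    ∑ e ∈ Finset.range (2 * i + 1),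
      (-1 : ℚ) ^ e * (((2 * i).choose e : ℚ) /
        (((i + j).choose e : ℚ) * ((i + j).choose (2 * i - e) : ℚ))) *
        (j.choose e : ℚ) * (j.choose (2 * i - e) : ℚ)
      = (-1 : ℚ) ^ i * ((2 * i).choose i : ℚ) / ((i + j).choose i : ℚ) ^ 2 := by
  have hdiff := (binomialRatioPoly ℚ i j).sum_range_neg_one_pow_mul_choose_mul_eval
  rw [binomialRatioPoly_natDegree, binomialRatioPoly_leadingCoeff] at hdiff
  calc _ = ∑ e ∈ range (2 * i + 1), (j ! / (i + j)! : ℚ) ^ 2 *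
        ((-1) ^ (2 * i - e) * ((2 * i).choose e : ℚ) * (binomialRatioPoly ℚ i j).eval (e : ℚ)) :=
        sum_congr rfl fun e he ↦
          summand_eq_mul_binomialRatioPoly_eval hij (Nat.lt_succ_iff.mp (mem_range.mp he))
    _ = (j ! / (i + j)! : ℚ) ^ 2 * ((2 * i)! * (-1) ^ i) := by rw [← mul_sum, hdiff]
    _ = _ := by
      rw [Nat.cast_choose ℚ (show i ≤ 2 * i by omega), Nat.cast_choose ℚ (show i ≤ i + j by omega),
        show 2 * i - i = i by omega, Nat.add_sub_cancel_left]
      field_simp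
end

section
/- Let $f, m, n$ be positive integers with $f \leq m \leq n$. Then $\sum_{e=0}^{f} (-1)^e \frac{\binom{f}{e}\binom{n-m}{e}}{\binom{n}{e}} = \frac{\binom{m}{f}}{\binom{n}{f}}$. In particular the left-hand sum is nonzero. -/
/-!
Multiplying the sum by `C(n, f)` and using `C(n, f) C(f, e) = C(n, e) C(n - e, f - e)`, with
`n = m + a`, it becomes `∑ₑ (-1)^e C(a, e) C(m + a - e, f - e)`. This is the coefficient of `X^f`
in `(X + 1)^m = ((X + 1) - X)^a (X + 1)^m`, once the first factor is expanded by the binomial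
theorem, so it equals `C(m, f)`.
-/

open Finset Polynomial

theorem X_add_one_pow_eq_sum_X_pow_mul (R : Type*) [CommRing R] (a k : ℕ) :
    (X + 1 : R[X]) ^ k =
      ∑ e ∈ range (a + 1), C ((-1) ^ e * (a.choose e : R)) * X ^ e * (X + 1) ^ (k + a - e) := by
  calc (X + 1 : R[X]) ^ k = (-X + (X + 1)) ^ a * (X + 1) ^ k := by ring
    _ = _ := by
      rw [add_pow, sum_mul]
      refine sum_congr rfl fun e he => ?_
      have hea : e ≤ a := Nat.lt_succ_iff.mp (mem_range.mp he)
      rw [show k + a - e = (a - e) + k by omega, pow_add, neg_pow, C_mul, C_pow, C_neg, C_1,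
        ← C_eq_natCast]
      ring

theorem sum_neg_one_pow_mul_choose_mul_choose (R : Type*) [CommRing R] (a k f : ℕ) :
    ∑ e ∈ range (f + 1), (-1) ^ e * (a.choose e : R) * ((k + a - e).choose (f - e) : R) =
      (k.choose f : R) := by
  have h := congrArg (coeff · f) (X_add_one_pow_eq_sum_X_pow_mul R a k)
  simp only [coeff_X_add_one_pow, finsetSum_coeff, mul_assoc, coeff_C_mul, coeff_X_pow_mul',
    mul_ite, mul_zero] at h
  have hfilter : (range (a + 1)).filter (· ≤ f) = range (min a f + 1) := by
    ext e
    simp only [mem_filter, mem_range]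
    omega
  rw [h, ← sum_filter, hfilter]
  refine (sum_subset (range_subset_range.mpr (by omega)) fun e he he' => ?_).symm.trans
    (sum_congr rfl fun e _ => by simp only [mul_assoc])
  rw [Nat.choose_eq_zero_of_lt (by simp only [mem_range] at he he'; omega)]
  simp

theorem choose_div_choose_eq_choose_div_choose (K : Type*) [Field K] [CharZero K] {e f n : ℕ}
    (hef : e ≤ f) (hfn : f ≤ n) :
    (f.choose e : K) / n.choose e = ((n - e).choose (f - e) : K) / n.choose f := by
  rw [div_eq_div_iff (by exact_mod_cast (Nat.choose_pos (hef.trans hfn)).ne')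
    (by exact_mod_cast (Nat.choose_pos hfn).ne'), mul_comm, mul_comm ((n - e).choose _ : K)]
  exact_mod_cast Nat.choose_mul hef

theorem stmt_5_general (f m n : ℕ) (hfm : f ≤ m) (hmn : m ≤ n) :
    (∑ e ∈ Finset.range (f + 1),
        (-1 : ℚ) ^ e * ((f.choose e : ℚ) * ((n - m).choose e : ℚ)) / (n.choose e : ℚ))
      = (m.choose f : ℚ) / (n.choose f : ℚ) ∧
    (∑ e ∈ Finset.range (f + 1),
        (-1 : ℚ) ^ e * ((f.choose e : ℚ) * ((n - m).choose e : ℚ)) / (n.choose e : ℚ)) ≠ 0 := by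
  obtain ⟨a, rfl⟩ := Nat.exists_eq_add_of_le hmn
  have hsum : ∑ e ∈ range (f + 1),
      (-1 : ℚ) ^ e * ((f.choose e : ℚ) * (a.choose e : ℚ)) / ((m + a).choose e : ℚ)
        = (m.choose f : ℚ) / ((m + a).choose f : ℚ) := by
    rw [← sum_neg_one_pow_mul_choose_mul_choose ℚ a m f, sum_div]
    refine sum_congr rfl fun e he => ?_
    have hef : e ≤ f := Nat.lt_succ_iff.mp (mem_range.mp he)
    rw [mul_comm (f.choose e : ℚ), ← mul_assoc, mul_div_assoc,
      choose_div_choose_eq_choose_div_choose ℚ hef (by omega), mul_div_assoc]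
  rw [Nat.add_sub_cancel_left, hsum]
  exact ⟨rfl, div_ne_zero (by exact_mod_cast (Nat.choose_pos hfm).ne')
    (by exact_mod_cast (Nat.choose_pos (by omega)).ne')⟩

theorem stmt_5 (f m n : ℕ) (hf : 0 < f) (hfm : f ≤ m) (hmn : m ≤ n) :
    (∑ e ∈ Finset.range (f + 1),
        (-1 : ℚ) ^ e * ((f.choose e : ℚ) * ((n - m).choose e : ℚ)) / (n.choose e : ℚ))
      = (m.choose f : ℚ) / (n.choose f : ℚ) ∧
    (∑ e ∈ Finset.range (f + 1),
        (-1 : ℚ) ^ e * ((f.choose e : ℚ) * ((n - m).choose e : ℚ)) / (n.choose e : ℚ)) ≠ 0 :=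
  stmt_5_general f m n hfm hmn
end

section
/- The coefficient $y_{m,f}^{p, b^{2f}}$ appearing in the lowering computation equals the hypergeometric-type sum $\sum_{e=0}^{f} (-1)^e \frac{\binom{f}{e}}{\binom{n}{e}\binom{2f}{f-e}}\binom{n-m}{e}\binom{2f}{f-e}$, and this simplifies to $\sum_{e=0}^{f} (-1)^e \frac{\binom{f}{e}\binom{n-m}{e}}{\binom{n}{e}}$, which equals $\frac{\binom{m}{f}}{\binom{n}{f}}$ and is therefore positive; here $f, m, n$ are positive integers with $f \leq m \leq n$. -/
open Finset Polynomial

/-! Since `C(n,f) C(f,e) = C(n,e) C(n-e,f-e)`, the sum equals `S / C(n,f)` with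
`S = ∑ₑ (-1)^e C(j,e) C(n-e,f-e)` and `j = n - m`. Expanding
`(1+X)^(n-j) = (1+X)^(n-j) (-X + (1+X))^j` by the binomial theorem and reading off the
coefficient of `X^f` gives `S = C(n-j,f) = C(m,f)`. -/

theorem one_add_X_pow_sub_eq_sum (j n : ℕ) (hj : j ≤ n) :
    ((1 + X : ℤ[X])) ^ (n - j) =
      ∑ e ∈ range (j + 1), C ((-1) ^ e * (j.choose e : ℤ)) * (X ^ e * (1 + X) ^ (n - e)) := by
  calc ((1 + X : ℤ[X])) ^ (n - j) = (1 + X) ^ (n - j) * (-X + (1 + X)) ^ j := by simp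
    _ = _ := by
      rw [add_pow (-X), mul_sum]
      refine sum_congr rfl fun e he ↦ ?_
      have hej : e ≤ j := Nat.lt_succ_iff.mp (mem_range.mp he)
      rw [show n - e = (n - j) + (j - e) by omega, pow_add, neg_pow, C_mul, C_pow, C_neg, C_1,
        map_natCast]
      ring

theorem sum_neg_one_pow_mul_choose_mul_choose_sub (j n f : ℕ) (hj : j ≤ n) :
    ∑ e ∈ range (f + 1), (-1 : ℤ) ^ e * j.choose e * (n - e).choose (f - e) =
      (n - j).choose f := by
  have h := congrArg (coeff · f) (one_add_X_pow_sub_eq_sum j n hj)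
  simp only [coeff_one_add_X_pow, finsetSum_coeff, coeff_C_mul, coeff_X_pow_mul'] at h
  rw [h]
  -- `f - e` truncates, so the terms with `e > f` must be cut off by hand
  set g : ℕ → ℤ := fun e ↦
    (-1) ^ e * j.choose e * if e ≤ f then ((n - e).choose (f - e) : ℤ) else 0
  calc _ = ∑ e ∈ range (f + 1), g e :=
        sum_congr rfl fun e he ↦ by simp [g, if_pos (Nat.lt_succ_iff.mp (mem_range.mp he))]
    _ = ∑ e ∈ range (j + f + 1), g e :=
        sum_subset (range_subset_range.2 (by omega)) fun e _ he ↦ by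
          simp [g, if_neg (show ¬e ≤ f by simp at he; omega)]
    _ = ∑ e ∈ range (j + 1), g e :=
        (sum_subset (range_subset_range.2 (by omega)) fun e _ he ↦ by
          simp [g, Nat.choose_eq_zero_of_lt (show j < e by simp at he; omega)]).symm

theorem sum_neg_one_pow_mul_choose_div_choose (f m n : ℕ) (hfn : f ≤ n) (hmn : m ≤ n) :
    ∑ e ∈ range (f + 1), (-1 : ℚ) ^ e * (f.choose e * (n - m).choose e) / n.choose e =
      m.choose f / n.choose f := by
  have hsum : ∑ e ∈ range (f + 1), (-1 : ℚ) ^ e * (n - m).choose e * (n - e).choose (f - e) =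
      m.choose f := by
    have h := sum_neg_one_pow_mul_choose_mul_choose_sub (n - m) n f (Nat.sub_le n m)
    rw [Nat.sub_sub_self hmn] at h
    exact_mod_cast h
  rw [← hsum, sum_div]
  refine sum_congr rfl fun e he ↦ ?_
  have hef : e ≤ f := Nat.lt_succ_iff.mp (mem_range.mp he)
  have hne : (n.choose e : ℚ) ≠ 0 := by exact_mod_cast (Nat.choose_pos (hef.trans hfn)).ne'
  have hnf : (n.choose f : ℚ) ≠ 0 := by exact_mod_cast (Nat.choose_pos hfn).ne'
  have h : (n.choose f * f.choose e : ℚ) = n.choose e * (n - e).choose (f - e) := by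
    exact_mod_cast Nat.choose_mul (n := n) hef
  field_simp
  linear_combination ((n - m).choose e : ℚ) * h

theorem stmt_18_general (f m n : ℕ) (hfm : f ≤ m) (hmn : m ≤ n) :
    (∑ e ∈ Finset.range (f + 1),
        (-1 : ℚ) ^ e * ((f.choose e : ℚ) /
          ((n.choose e : ℚ) * (((2 * f).choose (f - e) : ℚ)))) *
          ((n - m).choose e : ℚ) * ((2 * f).choose (f - e) : ℚ))
      = (∑ e ∈ Finset.range (f + 1),
          (-1 : ℚ) ^ e * ((f.choose e : ℚ) * ((n - m).choose e : ℚ)) / (n.choose e : ℚ)) ∧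
    (∑ e ∈ Finset.range (f + 1),
        (-1 : ℚ) ^ e * ((f.choose e : ℚ) * ((n - m).choose e : ℚ)) / (n.choose e : ℚ))
      = (m.choose f : ℚ) / (n.choose f : ℚ) ∧
    0 < (∑ e ∈ Finset.range (f + 1),
        (-1 : ℚ) ^ e * ((f.choose e : ℚ) * ((n - m).choose e : ℚ)) / (n.choose e : ℚ)) := by
  have hsum := sum_neg_one_pow_mul_choose_div_choose f m n (hfm.trans hmn) hmn
  refine ⟨sum_congr rfl fun e _ ↦ ?_, hsum, ?_⟩
  · have h : ((2 * f).choose (f - e) : ℚ) ≠ 0 := by exact_mod_cast (Nat.choose_pos (by omega)).ne'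
    field_simp
  · rw [hsum]
    exact div_pos (mod_cast Nat.choose_pos hfm) (mod_cast Nat.choose_pos (hfm.trans hmn))

theorem stmt_18 (f m n : ℕ) (hf : 0 < f) (hfm : f ≤ m) (hmn : m ≤ n) :
    (∑ e ∈ Finset.range (f + 1),
        (-1 : ℚ) ^ e * ((f.choose e : ℚ) /
          ((n.choose e : ℚ) * (((2 * f).choose (f - e) : ℚ)))) *
          ((n - m).choose e : ℚ) * ((2 * f).choose (f - e) : ℚ))
      = (∑ e ∈ Finset.range (f + 1),
          (-1 : ℚ) ^ e * ((f.choose e : ℚ) * ((n - m).choose e : ℚ)) / (n.choose e : ℚ)) ∧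
    (∑ e ∈ Finset.range (f + 1),
        (-1 : ℚ) ^ e * ((f.choose e : ℚ) * ((n - m).choose e : ℚ)) / (n.choose e : ℚ))
      = (m.choose f : ℚ) / (n.choose f : ℚ) ∧
    0 < (∑ e ∈ Finset.range (f + 1),
        (-1 : ℚ) ^ e * ((f.choose e : ℚ) * ((n - m).choose e : ℚ)) / (n.choose e : ℚ)) :=
  stmt_18_general f m n hfm hmn
end
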